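/- For any TU game (N,v) and graph Γ=(N,E), if L ⊆ E is a nonempty edge set such that the subgraph Γ_L = (N[L], L) is not connected, then the Harsanyi dividend of L in the link game w^v is zero: λ_L(w^v) = 0. -/

import Mathlib

open scoped Classical

noncomputable section

variable {V : Type*} [Fintype V] [DecidableEq V]

/-- The vertex set of the connected component of `i` in the graph with edge set `L`. -/
def comp (L : Finset (Sym2 V)) (i : V) : Finset V :=
  Finset.univ.filter fun j =>
    (SimpleGraph.fromEdgeSet (↑L : Set (Sym2 V))).Reachable i j

/-- Nodes covered by the edge set `L` (the node set `N[L]`). -/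
def covered (L : Finset (Sym2 V)) : Finset V :=
  Finset.univ.filter fun i => ∃ e ∈ L, i ∈ e

/-- The collection of (vertex sets of) connected components of the edge-induced
subgraph `Γ_L = (N[L], L)`. -/
def comps (L : Finset (Sym2 V)) : Finset (Finset V) :=
  (covered L).image (comp L)

/-- The link game `w^v` associated with the game `v` and an edge set. -/
def linkGame (v : Finset V → ℝ) (L : Finset (Sym2 V)) : ℝ :=
  ∑ C ∈ comps L, v C

/-- Shapley value of player `e` in the game `w` with player set `E`. -/
def shapley {α : Type*} [DecidableEq α] (E : Finset α) (w : Finset α → ℝ) (e : α) : ℝ :=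
  ∑ L ∈ (E.erase e).powerset,
    ((L.card.factorial : ℝ) * ((E.card - L.card - 1).factorial : ℝ) / (E.card.factorial : ℝ)) *
      (w (insert e L) - w L)

/-- Harsanyi dividend of coalition `L` in the game `w`. -/
def dividend {α : Type*} [DecidableEq α] (w : Finset α → ℝ) (L : Finset α) : ℝ :=
  ∑ T ∈ L.powerset, (-1 : ℝ) ^ (L.card - T.card) * w T

/-- The position value of node `i` in the communication situation `(N, v, E)`. -/
def positionValue (v : Finset V → ℝ) (E : Finset (Sym2 V)) (i : V) : ℝ :=
  (1 / 2) * ∑ e ∈ E.filter (fun e => i ∈ e), shapley E (linkGame v) e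

def Superadditive (v : Finset V → ℝ) : Prop :=
  ∀ S T : Finset V, Disjoint S T → v S + v T ≤ v (S ∪ T)

def ConvexGame (v : Finset V → ℝ) : Prop :=
  ∀ S T : Finset V, v S + v T ≤ v (S ∪ T) + v (S ∩ T)

def ZeroNormalized (v : Finset V → ℝ) : Prop :=
  v ∅ = 0 ∧ ∀ i : V, v {i} = 0

def SymmetricGame (v : Finset V → ℝ) (f : ℕ → ℝ) : Prop :=
  ∀ S : Finset V, v S = f S.card

/-- An edge set without loops. -/
def SimpleEdges (E : Finset (Sym2 V)) : Prop := ∀ e ∈ E, ¬ e.IsDiag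

/-- The edge-induced subgraph `Γ_L = (N[L], L)` is connected. -/
def EdgeConnected (L : Finset (Sym2 V)) : Prop :=
  ∀ i ∈ covered L, ∀ j ∈ covered L,
    (SimpleGraph.fromEdgeSet (↑L : Set (Sym2 V))).Reachable i j

/-- Component of `i` in the subgraph of `Γ_L` induced on the vertex set `S`. -/
def compIn (L : Finset (Sym2 V)) (S : Finset V) (i : V) : Finset V :=
  S.filter fun j =>
    (SimpleGraph.fromEdgeSet
      (↑(L.filter fun e => ∀ x ∈ e, x ∈ S) : Set (Sym2 V))).Reachable i j

/-- Number of connected components of the subgraph of `Γ_L` induced on `S`. -/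
def numCompsIn (L : Finset (Sym2 V)) (S : Finset V) : ℕ :=
  (S.image (compIn L S)).card

/-- A cutvertex of `Γ_L`: a vertex whose removal increases the number of components. -/
def IsCutvertex (L : Finset (Sym2 V)) (i : V) : Prop :=
  i ∈ covered L ∧ numCompsIn L (covered L) < numCompsIn L ((covered L).erase i)

/-- The set of cutedges of `L`: edges both of whose endpoints are cutvertices. -/
def cutedges (L : Finset (Sym2 V)) : Finset (Sym2 V) :=
  L.filter fun e => ∀ x ∈ e, IsCutvertex L x

/-- The attachment game `v_a(S) = 2(|S| - 1)` (and `v_a(∅) = 0`). -/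
def va : Finset V → ℝ := fun S => if S = ∅ then 0 else 2 * ((S.card : ℝ) - 1)

/-- The star on `V` with hub `c`: all (non-loop) edges incident to `c`. -/
def starEdges (c : V) : Finset (Sym2 V) :=
  Finset.univ.filter fun e => ¬ e.IsDiag ∧ c ∈ e

/-- The chain (path) on `Fin n`, with edges `{i, i+1}`. -/
def chainEdges (n : ℕ) : Finset (Sym2 (Fin n)) :=
  Finset.univ.filter fun e => ∃ i j : Fin n, e = s(i, j) ∧ (j : ℕ) = (i : ℕ) + 1

/-- `F(s, r) = ∑_{k=0}^{r} (-1)^k C(r,k) f(s-k)` for `f : ℕ → ℝ`. -/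
def Ffun (f : ℕ → ℝ) (s r : ℕ) : ℝ :=
  ∑ k ∈ Finset.range (r + 1), (-1 : ℝ) ^ k * (r.choose k : ℝ) * f (s - k)

/-- `F(s, r) = ∑_{k=0}^{r} (-1)^k C(r,k) f(s-k)` for `f : ℝ → ℝ`. -/
def FfunR (f : ℝ → ℝ) (s r : ℕ) : ℝ :=
  ∑ k ∈ Finset.range (r + 1), (-1 : ℝ) ^ k * (r.choose k : ℝ) * f ((s : ℝ) - (k : ℝ))


lemma mem_covered {L : Finset (Sym2 V)} {x : V} : x ∈ covered L ↔ ∃ e ∈ L, x ∈ e := by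
  simp [covered]

lemma covered_mono {A B : Finset (Sym2 V)} (h : A ⊆ B) : covered A ⊆ covered B := by
  intro x hx
  rw [mem_covered] at hx ⊢
  obtain ⟨e, he, hxe⟩ := hx
  exact ⟨e, h he, hxe⟩

lemma covered_union (A B : Finset (Sym2 V)) : covered (A ∪ B) = covered A ∪ covered B := by
  ext x
  simp only [mem_covered, Finset.mem_union]
  constructor
  · rintro ⟨e, he | he, hx⟩
    · exact Or.inl ⟨e, he, hx⟩
    · exact Or.inr ⟨e, he, hx⟩
  · rintro (⟨e, he, hx⟩ | ⟨e, he, hx⟩)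
    · exact ⟨e, Or.inl he, hx⟩
    · exact ⟨e, Or.inr he, hx⟩

lemma covered_of_reach {L : Finset (Sym2 V)} {i j : V} (hi : i ∈ covered L)
    (h : (SimpleGraph.fromEdgeSet (↑L : Set (Sym2 V))).Reachable i j) : j ∈ covered L := by
  obtain ⟨p⟩ := h
  induction p with
  | nil => exact hi
  | @cons a b c hab p ih =>
    apply ih
    have hmem : s(a, b) ∈ (↑L : Set (Sym2 V)) := ((SimpleGraph.fromEdgeSet_adj _).mp hab).1
    rw [mem_covered]
    exact ⟨s(a, b), by exact_mod_cast hmem, Sym2.mem_mk_right a b⟩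

lemma reach_local {A B : Finset (Sym2 V)} (hd : Disjoint (covered A) (covered B)) :
    ∀ {i j : V}, i ∈ covered A →
      (SimpleGraph.fromEdgeSet (↑(A ∪ B) : Set (Sym2 V))).Reachable i j →
      (SimpleGraph.fromEdgeSet (↑A : Set (Sym2 V))).Reachable i j := by
  intro i j hi h
  obtain ⟨p⟩ := h
  induction p with
  | nil => rfl
  | @cons a b c hab p ih =>
    have hmem : s(a, b) ∈ (↑(A ∪ B) : Set (Sym2 V)) := ((SimpleGraph.fromEdgeSet_adj _).mp hab).1
    have hne : a ≠ b := ((SimpleGraph.fromEdgeSet_adj _).mp hab).2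
    have hmem' : s(a, b) ∈ A ∪ B := by exact_mod_cast hmem
    rw [Finset.mem_union] at hmem'
    have heA : s(a, b) ∈ A := by
      rcases hmem' with h1 | h1
      · exact h1
      · exfalso
        have : a ∈ covered B := mem_covered.mpr ⟨s(a, b), h1, Sym2.mem_mk_left a b⟩
        exact (Finset.disjoint_left.mp hd hi) this
    have hbA : b ∈ covered A := mem_covered.mpr ⟨s(a, b), heA, Sym2.mem_mk_right a b⟩
    have hadj : (SimpleGraph.fromEdgeSet (↑A : Set (Sym2 V))).Adj a b :=
      (SimpleGraph.fromEdgeSet_adj _).mpr ⟨by exact_mod_cast heA, hne⟩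
    exact hadj.reachable.trans (ih hbA)

lemma self_mem_comp {L : Finset (Sym2 V)} (i : V) : i ∈ comp L i := by
  simp only [comp, Finset.mem_filter, Finset.mem_univ, true_and]
  exact SimpleGraph.Reachable.refl i

lemma comp_subset_covered {L : Finset (Sym2 V)} {i : V} (hi : i ∈ covered L) :
    comp L i ⊆ covered L := by
  intro j hj
  simp only [comp, Finset.mem_filter, Finset.mem_univ, true_and] at hj
  exact covered_of_reach hi hj

lemma comp_union_eq {A B : Finset (Sym2 V)} (hd : Disjoint (covered A) (covered B))
    {i : V} (hi : i ∈ covered A) : comp (A ∪ B) i = comp A i := by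
  ext j
  simp only [comp, Finset.mem_filter, Finset.mem_univ, true_and]
  constructor
  · exact fun h => reach_local hd hi h
  · intro h
    exact h.mono (SimpleGraph.fromEdgeSet_mono (by exact_mod_cast Finset.subset_union_left))

lemma comps_union {A B : Finset (Sym2 V)} (hd : Disjoint (covered A) (covered B)) :
    comps (A ∪ B) = comps A ∪ comps B := by
  unfold comps
  rw [covered_union, Finset.image_union]
  congr 1
  · apply Finset.image_congr
    intro i hi
    exact comp_union_eq hd hi
  · apply Finset.image_congr
    intro i hi
    rw [Finset.union_comm A B]
    exact comp_union_eq hd.symm hi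

lemma comps_mem {L : Finset (Sym2 V)} {C : Finset V} (h : C ∈ comps L) :
    C.Nonempty ∧ C ⊆ covered L := by
  obtain ⟨i, hi, rfl⟩ := Finset.mem_image.mp h
  exact ⟨⟨i, self_mem_comp i⟩, comp_subset_covered hi⟩

lemma comps_disjoint {A B : Finset (Sym2 V)} (hd : Disjoint (covered A) (covered B)) :
    Disjoint (comps A) (comps B) := by
  rw [Finset.disjoint_left]
  intro C hA hB
  obtain ⟨⟨x, hx⟩, hsubA⟩ := comps_mem hA
  obtain ⟨_, hsubB⟩ := comps_mem hB
  exact (Finset.disjoint_left.mp hd (hsubA hx)) (hsubB hx)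

lemma linkGame_union (v : Finset V → ℝ) {A B : Finset (Sym2 V)}
    (hd : Disjoint (covered A) (covered B)) :
    linkGame v (A ∪ B) = linkGame v A + linkGame v B := by
  unfold linkGame
  rw [comps_union hd, Finset.sum_union (comps_disjoint hd)]

lemma sum_pow_neg_one {M : Finset (Sym2 V)} (hM : M.Nonempty) :
    ∑ T ∈ M.powerset, (-1 : ℝ) ^ (M.card - T.card) = 0 := by
  have key : ∀ T ∈ M.powerset, (-1 : ℝ) ^ (M.card - T.card)
      = (-1 : ℝ) ^ M.card * (-1 : ℝ) ^ T.card := by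
    intro T hT
    have hle : T.card ≤ M.card := Finset.card_le_card (Finset.mem_powerset.mp hT)
    have : (-1 : ℝ) ^ (M.card - T.card) * (-1 : ℝ) ^ T.card = (-1 : ℝ) ^ M.card := by
      rw [← pow_add]
      congr 1
      omega
    have hunit : ((-1 : ℝ) ^ T.card) * ((-1 : ℝ) ^ T.card) = 1 := by
      rw [← pow_add, Even.neg_one_pow ⟨T.card, rfl⟩]
    calc (-1 : ℝ) ^ (M.card - T.card)
        = (-1 : ℝ) ^ (M.card - T.card) * ((-1 : ℝ) ^ T.card * (-1 : ℝ) ^ T.card) := by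
          rw [hunit, mul_one]
      _ = ((-1 : ℝ) ^ (M.card - T.card) * (-1 : ℝ) ^ T.card) * (-1 : ℝ) ^ T.card := by ring
      _ = (-1 : ℝ) ^ M.card * (-1 : ℝ) ^ T.card := by rw [this]
  have hz : (∑ m ∈ M.powerset, (-1 : ℤ) ^ m.card) = 0 :=
    Finset.sum_powerset_neg_one_pow_card_of_nonempty hM
  have hzr : (∑ m ∈ M.powerset, (-1 : ℝ) ^ m.card) = 0 := by
    have := congrArg (fun z : ℤ => (z : ℝ)) hz
    push_cast at this
    exact this
  rw [Finset.sum_congr rfl key, ← Finset.mul_sum, hzr, mul_zero]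

/-- the Harsanyi dividend in the link game of a nonempty edge set whose
edge-induced subgraph is not connected is zero. -/
theorem dividend_eq_zero_of_not_connected (v : Finset V → ℝ) (hv : v ∅ = 0)
    (E : Finset (Sym2 V)) (hE : SimpleEdges E)
    (L : Finset (Sym2 V)) (hL : L ⊆ E) (hne : L.Nonempty)
    (hnc : ¬ EdgeConnected L) :
    dividend (linkGame v) L = 0 := by
  classical
  -- extract two vertices in covered L that are not reachable
  rw [EdgeConnected] at hnc
  push_neg at hnc
  obtain ⟨i, hi, j, hj, hij⟩ := hnc
  set G := SimpleGraph.fromEdgeSet (↑L : Set (Sym2 V)) with hG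
  -- endpoints of an edge of L are mutually reachable from i
  have endpt : ∀ e ∈ L, ∀ x ∈ e, ∀ y ∈ e, G.Reachable i x → G.Reachable i y := by
    intro e he x hx y hy hrx
    by_cases hxy : x = y
    · rwa [← hxy]
    · induction e with
      | _ a b =>
        have hxab : x = a ∨ x = b := Sym2.mem_iff.mp hx
        have hyab : y = a ∨ y = b := Sym2.mem_iff.mp hy
        have hexy : s(x, y) = s(a, b) := by
          rcases hxab with rfl | rfl <;> rcases hyab with rfl | rfl
          · exact absurd rfl hxy
          · rfl
          · exact Sym2.eq_swap
          · exact absurd rfl hxy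
        have hadj : G.Adj x y := by
          rw [hG, SimpleGraph.fromEdgeSet_adj]
          exact ⟨by rw [hexy]; exact_mod_cast he, hxy⟩
        exact hrx.trans hadj.reachable
  set L1 := L.filter (fun e => ∃ x ∈ e, G.Reachable i x) with hL1
  set L2 := L.filter (fun e => ¬ ∃ x ∈ e, G.Reachable i x) with hL2
  have hsplit : L1 ∪ L2 = L := Finset.filter_union_filter_not_eq _ L
  -- covered L1 consists of reachable vertices, covered L2 of unreachable ones
  have hcov1 : ∀ x ∈ covered L1, G.Reachable i x := by
    intro x hx
    obtain ⟨e, he, hxe⟩ := mem_covered.mp hx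
    rw [hL1, Finset.mem_filter] at he
    obtain ⟨y, hye, hry⟩ := he.2
    exact endpt e he.1 y hye x hxe hry
  have hcov2 : ∀ x ∈ covered L2, ¬ G.Reachable i x := by
    intro x hx hrx
    obtain ⟨e, he, hxe⟩ := mem_covered.mp hx
    rw [hL2, Finset.mem_filter] at he
    exact he.2 ⟨x, hxe, hrx⟩
  have hd : Disjoint (covered L1) (covered L2) := by
    rw [Finset.disjoint_left]
    intro x hx1 hx2
    exact hcov2 x hx2 (hcov1 x hx1)
  -- both parts are nonempty
  have hne1 : L1.Nonempty := by
    obtain ⟨e, he, hie⟩ := mem_covered.mp hi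
    exact ⟨e, by rw [hL1, Finset.mem_filter]; exact ⟨he, i, hie, SimpleGraph.Reachable.refl i⟩⟩
  have hne2 : L2.Nonempty := by
    obtain ⟨e, he, hje⟩ := mem_covered.mp hj
    refine ⟨e, ?_⟩
    rw [hL2, Finset.mem_filter]
    refine ⟨he, ?_⟩
    rintro ⟨x, hxe, hrx⟩
    exact hij (endpt e he x hxe j hje hrx)
  have hdisj12 : Disjoint L1 L2 := Finset.disjoint_filter_filter_not L L _
  -- additivity of the link game on subsets of L
  have hadd : ∀ T ∈ L.powerset,
      linkGame v T = linkGame v (T ∩ L1) + linkGame v (T ∩ L2) := by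
    intro T hT
    rw [Finset.mem_powerset] at hT
    have hdT : Disjoint (covered (T ∩ L1)) (covered (T ∩ L2)) :=
      hd.mono (covered_mono Finset.inter_subset_right) (covered_mono Finset.inter_subset_right)
    have hTeq : (T ∩ L1) ∪ (T ∩ L2) = T := by
      rw [← Finset.inter_union_distrib_left, hsplit]
      exact Finset.inter_eq_left.mpr hT
    calc linkGame v T = linkGame v ((T ∩ L1) ∪ (T ∩ L2)) := by rw [hTeq]
      _ = linkGame v (T ∩ L1) + linkGame v (T ∩ L2) := linkGame_union v hdT
  -- rewrite the dividend sum over the product of powersets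
  have hcard : L.card = L1.card + L2.card := by
    rw [← hsplit, Finset.card_union_of_disjoint hdisj12]
  unfold dividend
  rw [Finset.sum_congr rfl (fun T hT => by rw [hadd T hT])]
  have hbij : ∑ T ∈ L.powerset,
      (-1 : ℝ) ^ (L.card - T.card) * (linkGame v (T ∩ L1) + linkGame v (T ∩ L2))
      = ∑ P ∈ L1.powerset ×ˢ L2.powerset,
        (-1 : ℝ) ^ (L.card - (P.1 ∪ P.2).card) * (linkGame v P.1 + linkGame v P.2) := by
    refine Finset.sum_nbij' (fun T => (T ∩ L1, T ∩ L2)) (fun P => P.1 ∪ P.2) ?_ ?_ ?_ ?_ ?_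
    · intro T hT
      rw [Finset.mem_powerset] at hT
      rw [Finset.mem_product]
      exact ⟨Finset.mem_powerset.mpr Finset.inter_subset_right,
        Finset.mem_powerset.mpr Finset.inter_subset_right⟩
    · intro P hP
      rw [Finset.mem_product] at hP
      rw [Finset.mem_powerset]
      rw [← hsplit]
      exact Finset.union_subset_union (Finset.mem_powerset.mp hP.1) (Finset.mem_powerset.mp hP.2)
    · intro T hT
      rw [Finset.mem_powerset] at hT
      simp only
      rw [← Finset.inter_union_distrib_left, hsplit]
      exact Finset.inter_eq_left.mpr hT
    · intro P hP
      rw [Finset.mem_product] at hP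
      have h1 : P.1 ⊆ L1 := Finset.mem_powerset.mp hP.1
      have h2 : P.2 ⊆ L2 := Finset.mem_powerset.mp hP.2
      have d21 : P.2 ∩ L1 = ∅ := by
        rw [Finset.eq_empty_iff_forall_notMem]
        intro a ha
        rw [Finset.mem_inter] at ha
        exact Finset.disjoint_left.mp hdisj12 ha.2 (h2 ha.1)
      have d12 : P.1 ∩ L2 = ∅ := by
        rw [Finset.eq_empty_iff_forall_notMem]
        intro a ha
        rw [Finset.mem_inter] at ha
        exact Finset.disjoint_left.mp hdisj12 (h1 ha.1) ha.2
      have e1 : (P.1 ∪ P.2) ∩ L1 = P.1 := by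
        rw [Finset.union_inter_distrib_right, Finset.inter_eq_left.mpr h1, d21,
          Finset.union_empty]
      have e2 : (P.1 ∪ P.2) ∩ L2 = P.2 := by
        rw [Finset.union_inter_distrib_right, Finset.inter_eq_left.mpr h2, d12,
          Finset.empty_union]
      rw [e1, e2]
    · intro T hT
      rw [Finset.mem_powerset] at hT
      have hTeq : (T ∩ L1) ∪ (T ∩ L2) = T := by
        rw [← Finset.inter_union_distrib_left, hsplit]
        exact Finset.inter_eq_left.mpr hT
      simp only [hTeq]
  rw [hbij]
  rw [Finset.sum_product]
  have hsign : ∀ T1 ∈ L1.powerset, ∀ T2 ∈ L2.powerset,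
      (-1 : ℝ) ^ (L.card - (T1 ∪ T2).card)
      = (-1 : ℝ) ^ (L1.card - T1.card) * (-1 : ℝ) ^ (L2.card - T2.card) := by
    intro T1 h1 T2 h2
    rw [Finset.mem_powerset] at h1 h2
    have c1 : T1.card ≤ L1.card := Finset.card_le_card h1
    have c2 : T2.card ≤ L2.card := Finset.card_le_card h2
    have hdT : Disjoint T1 T2 := hdisj12.mono h1 h2
    rw [Finset.card_union_of_disjoint hdT, ← pow_add]
    congr 1
    omega
  calc (∑ T1 ∈ L1.powerset, ∑ T2 ∈ L2.powerset,
        (-1 : ℝ) ^ (L.card - (T1 ∪ T2).card) * (linkGame v T1 + linkGame v T2))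
      = ∑ T1 ∈ L1.powerset, ∑ T2 ∈ L2.powerset,
        ((-1 : ℝ) ^ (L1.card - T1.card) * (-1 : ℝ) ^ (L2.card - T2.card) * linkGame v T1
        + (-1 : ℝ) ^ (L1.card - T1.card) * (-1 : ℝ) ^ (L2.card - T2.card) * linkGame v T2) := by
        refine Finset.sum_congr rfl fun T1 h1 => Finset.sum_congr rfl fun T2 h2 => ?_
        rw [hsign T1 h1 T2 h2]; ring
    _ = 0 := by
        simp only [Finset.sum_add_distrib]
        rw [← Finset.sum_add_distrib]
        have z1 : ∑ T2 ∈ L2.powerset, (-1 : ℝ) ^ (L2.card - T2.card) = 0 := sum_pow_neg_one hne2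
        have z2 : ∑ T1 ∈ L1.powerset, (-1 : ℝ) ^ (L1.card - T1.card) = 0 := sum_pow_neg_one hne1
        have e1 : ∀ T1 : Finset (Sym2 V), ∑ T2 ∈ L2.powerset,
            (-1 : ℝ) ^ (L1.card - T1.card) * (-1 : ℝ) ^ (L2.card - T2.card) * linkGame v T1
            = 0 := by
          intro T1
          rw [← Finset.sum_mul, ← Finset.mul_sum, z1, mul_zero, zero_mul]
        have e2 : ∀ T1 : Finset (Sym2 V), ∑ T2 ∈ L2.powerset,
            (-1 : ℝ) ^ (L1.card - T1.card) * (-1 : ℝ) ^ (L2.card - T2.card) * linkGame v T2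
            = (-1 : ℝ) ^ (L1.card - T1.card) *
              ∑ T2 ∈ L2.powerset, (-1 : ℝ) ^ (L2.card - T2.card) * linkGame v T2 := by
          intro T1
          rw [Finset.mul_sum]
          exact Finset.sum_congr rfl fun T2 _ => by ring
        rw [Finset.sum_congr rfl fun T1 _ => by rw [e1 T1, e2 T1, zero_add], ← Finset.sum_mul, z2,
          zero_mul]

end
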